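/- For every u ∈ V, the extended codeword C_ext((u, 0)) lies in the extended error set E_ext if and only if u ∈ 𝓢_τ. (The null operators of the extended dual classical code, obtained by treating the reference as part of the system via Bell measurements, are exactly the stabilizer operators of the monitored Clifford circuit.) -/
import Mathlib


open Finset

/-- Pauli group modulo phases on `n` qubits, as the symplectic `𝔽₂`-vector space. -/
abbrev V (n : ℕ) := (Fin n → ZMod 2) × (Fin n → ZMod 2)

/-- The standard symplectic form `ω(u,u') = ∑ i, (x_i z'_i + z_i x'_i)`. -/
def omega {n : ℕ} (u u' : V n) : ZMod 2 :=
  ∑ i, (u.1 i * u'.2 i + u.2 i * u'.1 i)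

/-- The recursively constructed stabilizer group `𝓢_t` (0-indexed):
`𝓢_1 = span{v_1}` and `𝓢_{t+1} = span({v_{t+1}} ∪ {w ∈ 𝓢_t : ω(w, v_{t+1}) = 0})`. -/
def Stab {n : ℕ} (v : ℕ → V n) : ℕ → Submodule (ZMod 2) (V n)
  | 0 => Submodule.span (ZMod 2) {v 0}
  | (t+1) => Submodule.span (ZMod 2)
      ({v (t+1)} ∪ {w : V n | w ∈ Stab v t ∧ omega w (v (t+1)) = 0})

/-- The doubled space `W = V × V` (system together with the reference `R`). -/
abbrev W (n : ℕ) := V n × V n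

/-- The symplectic form on the doubled space:
`Ω((u,r),(u',r')) = ω(u,u') + ω(r,r')`. -/
def Omega {n : ℕ} (p q : W n) : ZMod 2 := omega p.1 q.1 + omega p.2 q.2

/-- The standard basis `g_1, …, g_{2n}` of `V` (0-indexed): first the `X`-type
single-qubit generators, then the `Z`-type ones. -/
def stdBasis {n : ℕ} (k : ℕ) : V n :=
  if k < n then ((fun i => if (i : ℕ) = k then 1 else 0), 0)
  else (0, fun i => if (i : ℕ) = k - n then 1 else 0)

/-- The extended measurement sequence: first the `2n` Bell vectors
`b_k = (g_k, g_k)`, then `w_i = (v_i, 0)` for `i = 1, …, τ`, in this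
chronological order (0-indexed). -/
def extSeq {n : ℕ} (v : ℕ → V n) (k : ℕ) : W n :=
  if k < 2 * n then (stdBasis k, stdBasis k) else (v (k - 2 * n), 0)

/-- The extended codeword map `C_ext(w)_j = Ω(w, (extended sequence)_j)`. -/
def extCodewordMap {n : ℕ} (τ : ℕ) (v : ℕ → V n) (w : W n) :
    Fin (2 * n + τ) → ZMod 2 :=
  fun j => Omega w (extSeq v (j : ℕ))

/-- Extended error vector of the `i`-th measured vector of the extended
sequence: its `Ω`-pairings with all measured vectors occurring earlier in the
sequence, and `0` with all later ones. -/
def extErrVec {n : ℕ} (τ : ℕ) (v : ℕ → V n) (i : ℕ) : Fin (2 * n + τ) → ZMod 2 :=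
  fun j => if (j : ℕ) ≤ i then Omega (extSeq v i) (extSeq v (j : ℕ)) else 0

/-- The extended error set `E_ext`: the `𝔽₂`-span of all extended error vectors. -/
def extErrSet {n : ℕ} (τ : ℕ) (v : ℕ → V n) :
    Submodule (ZMod 2) (Fin (2 * n + τ) → ZMod 2) :=
  Submodule.span (ZMod 2)
    (Set.range fun i : Fin (2 * n + τ) => extErrVec τ v (i : ℕ))

section helpers
variable {n : ℕ}

lemma zmod2_add_self : ∀ a : ZMod 2, a + a = 0 := by decide

lemma omega_add_left (u u' x : V n) : omega (u + u') x = omega u x + omega u' x := by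
  simp only [omega]
  rw [← Finset.sum_add_distrib]
  refine Finset.sum_congr rfl fun i _ => ?_
  simp only [Prod.fst_add, Prod.snd_add, Pi.add_apply]
  ring

lemma omega_smul_left (c : ZMod 2) (u x : V n) : omega (c • u) x = c * omega u x := by
  simp only [omega]
  rw [Finset.mul_sum]
  refine Finset.sum_congr rfl fun i _ => ?_
  simp only [Prod.smul_fst, Prod.smul_snd, Pi.smul_apply, smul_eq_mul]
  ring

lemma omega_zero_left (x : V n) : omega 0 x = 0 := by simp [omega]

def omegaL (x : V n) : V n →ₗ[ZMod 2] ZMod 2 where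
  toFun u := omega u x
  map_add' u u' := omega_add_left u u' x
  map_smul' c u := omega_smul_left c u x

lemma omega_sum_left {ι : Type*} (s : Finset ι) (f : ι → V n) (x : V n) :
    omega (∑ i ∈ s, f i) x = ∑ i ∈ s, omega (f i) x :=
  map_sum (omegaL x) f s

lemma omega_stdBasis_lt (u : V n) (k : Fin n) :
    omega u (stdBasis (k : ℕ)) = u.2 k := by
  simp [omega, stdBasis, k.isLt, mul_ite, Fin.val_eq_val, Finset.sum_ite_eq']

lemma omega_stdBasis_ge (u : V n) (k : Fin n) :
    omega u (stdBasis (n + (k : ℕ))) = u.1 k := by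
  have h : ¬ (n + (k : ℕ) < n) := by omega
  simp [omega, stdBasis, h, Nat.add_sub_cancel_left, mul_ite, Fin.val_eq_val,
    Finset.sum_ite_eq']

lemma eq_of_forall_omega_stdBasis {u w : V n}
    (h : ∀ k, k < 2 * n → omega u (stdBasis k) = omega w (stdBasis k)) : u = w := by
  refine Prod.ext (funext fun i => ?_) (funext fun i => ?_)
  · have := h (n + (i : ℕ)) (by omega)
    rwa [omega_stdBasis_ge, omega_stdBasis_ge] at this
  · have := h (i : ℕ) (by omega)
    rwa [omega_stdBasis_lt, omega_stdBasis_lt] at this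

lemma extSeq_lt (v : ℕ → V n) {k : ℕ} (hk : k < 2 * n) :
    extSeq v k = (stdBasis k, stdBasis k) := if_pos hk

lemma extSeq_ge (v : ℕ → V n) (t : ℕ) : extSeq v (2 * n + t) = (v t, 0) := by
  have h : ¬ (2 * n + t < 2 * n) := by omega
  simp [extSeq, h]

lemma Omega_left_zero (u : V n) (q : W n) : Omega (u, (0 : V n)) q = omega u q.1 := by
  simp [Omega, omega_zero_left]

lemma extErrVec_eq_zero {τ : ℕ} (v : ℕ → V n) {i : ℕ} (hi : i < 2 * n) :
    extErrVec τ v i = 0 := by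
  funext j
  simp only [extErrVec, Pi.zero_apply]
  split
  · rename_i hj
    rw [extSeq_lt v hi, extSeq_lt v (lt_of_le_of_lt hj hi)]
    simp [Omega, zmod2_add_self]
  · rfl

end helpers
section stab
variable {n : ℕ}

lemma mem_stab_succ_iff (v : ℕ → V n) (m : ℕ) (u : V n) :
    u ∈ Stab v (m+1) ↔
      ∃ c : ZMod 2, ∃ w, w ∈ Stab v m ∧ omega w (v (m+1)) = 0 ∧ u = c • v (m+1) + w := by
  have hset : {w : V n | w ∈ Stab v m ∧ omega w (v (m+1)) = 0}
      = ↑(Stab v m ⊓ LinearMap.ker (omegaL (v (m+1)))) := by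
    ext w
    simp only [Set.mem_setOf_eq, SetLike.mem_coe, Submodule.mem_inf, LinearMap.mem_ker]
    rfl
  have hS : Stab v (m+1) = Submodule.span (ZMod 2)
      ({v (m+1)} ∪ {w : V n | w ∈ Stab v m ∧ omega w (v (m+1)) = 0}) := rfl
  constructor
  · intro hu
    rw [hS, hset, Submodule.span_union, Submodule.span_eq] at hu
    rcases Submodule.mem_sup.1 hu with ⟨y, hy, z, hz, hyz⟩
    rcases Submodule.mem_span_singleton.1 hy with ⟨c, rfl⟩
    rcases Submodule.mem_inf.1 hz with ⟨hz1, hz2⟩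
    exact ⟨c, z, hz1, LinearMap.mem_ker.1 hz2, hyz.symm⟩
  · rintro ⟨c, w, hw, hw0, rfl⟩
    rw [hS]
    refine Submodule.add_mem _ (Submodule.smul_mem _ c (Submodule.subset_span ?_))
      (Submodule.subset_span ?_)
    · exact Or.inl rfl
    · exact Or.inr ⟨hw, hw0⟩

lemma stab_iff_exists (v : ℕ → V n) :
    ∀ (m : ℕ) (u : V n), u ∈ Stab v m ↔
      ∃ d : ℕ → ZMod 2, (∑ t ∈ Finset.range (m+1), d t • v t = u) ∧
        ∀ s < m + 1, ∑ t ∈ Finset.range s, d t * omega (v t) (v s) = 0 := by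
  intro m
  induction m with
  | zero =>
    intro u
    constructor
    · intro hu
      rcases Submodule.mem_span_singleton.1 hu with ⟨c, rfl⟩
      refine ⟨fun _ => c, by simp, ?_⟩
      intro s hs
      interval_cases s
      simp
    · rintro ⟨d, hsum, -⟩
      exact Submodule.mem_span_singleton.2 ⟨d 0, by simpa using hsum⟩
  | succ m ih =>
    intro u
    rw [mem_stab_succ_iff]
    constructor
    · rintro ⟨c, w, hw, hw0, rfl⟩
      rcases (ih w).1 hw with ⟨d, hsum, hcond⟩
      refine ⟨fun t => if t = m + 1 then c else d t, ?_, ?_⟩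
      · have he : ∑ t ∈ Finset.range (m+1), (if t = m+1 then c else d t) • v t
             = ∑ t ∈ Finset.range (m+1), d t • v t :=
          Finset.sum_congr rfl fun t ht => by
            rw [if_neg (by have := Finset.mem_range.1 ht; omega)]
        rw [Finset.sum_range_succ, he, hsum]
        simp [add_comm]
      · intro s hs
        have hrw : ∀ s' : ℕ, s' ≤ m + 1 →
            ∑ t ∈ Finset.range s', (if t = m+1 then c else d t) * omega (v t) (v s')
            = ∑ t ∈ Finset.range s', d t * omega (v t) (v s') := by
          intro s' hs'
          refine Finset.sum_congr rfl fun t ht => ?_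
          rw [if_neg (by have := Finset.mem_range.1 ht; omega)]
        rcases Nat.lt_succ_iff_lt_or_eq.1 hs with hs' | rfl
        · rw [hrw s (by omega)]
          exact hcond s hs'
        · rw [hrw (m+1) le_rfl]
          have hw' : ∑ t ∈ Finset.range (m+1), d t * omega (v t) (v (m+1))
              = omega w (v (m+1)) := by
            rw [← hsum, omega_sum_left]
            exact Finset.sum_congr rfl fun t _ => (omega_smul_left _ _ _).symm
          rw [hw', hw0]
    · rintro ⟨d, hsum, hcond⟩
      refine ⟨d (m+1), ∑ t ∈ Finset.range (m+1), d t • v t,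
        (ih _).2 ⟨d, rfl, fun s hs => hcond s (by omega)⟩, ?_, ?_⟩
      · rw [omega_sum_left]
        have : ∑ t ∈ Finset.range (m+1), omega (d t • v t) (v (m+1))
            = ∑ t ∈ Finset.range (m+1), d t * omega (v t) (v (m+1)) :=
          Finset.sum_congr rfl fun t _ => omega_smul_left _ _ _
        rw [this]
        exact hcond (m+1) (by omega)
      · rw [← hsum, Finset.sum_range_succ, add_comm]

end stab

section main
variable {n τ : ℕ}

lemma sum_ite_range {M : Type*} [AddCommMonoid M] (g : ℕ → M) {s τ' : ℕ} (h : s ≤ τ') :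
    ∑ t ∈ Finset.range τ', (if t < s then g t else 0) = ∑ t ∈ Finset.range s, g t := by
  rw [← Finset.sum_subset (Finset.range_subset_range.2 h)
      (fun t _ hts => if_neg (fun hl => hts (Finset.mem_range.2 hl)))]
  exact Finset.sum_congr rfl fun t ht => if_pos (Finset.mem_range.1 ht)

lemma omega_sum_smul {ι : Type*} (s : Finset ι) (d : ι → ZMod 2) (f : ι → V n) (x : V n) :
    omega (∑ i ∈ s, d i • f i) x = ∑ i ∈ s, d i * omega (f i) x := by
  rw [omega_sum_left]
  exact Finset.sum_congr rfl fun i _ => omega_smul_left _ _ _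

lemma errvec_apply (v : ℕ → V n) (t : ℕ) (j : Fin (2*n+τ)) :
    extErrVec τ v (2*n+t) j =
      if (j:ℕ) < 2*n then omega (v t) (stdBasis (j:ℕ))
      else if (j:ℕ) ≤ 2*n+t then omega (v t) (v ((j:ℕ)-2*n)) else 0 := by
  by_cases hj : (j:ℕ) < 2*n
  · have hle : (j:ℕ) ≤ 2*n+t := by omega
    rw [if_pos hj]
    simp only [extErrVec, if_pos hle, extSeq_ge, extSeq_lt v hj]
    rw [Omega_left_zero]
  · rw [if_neg hj]
    have hj2 : (j:ℕ) = 2*n + ((j:ℕ)-2*n) := by omega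
    have hs := extSeq_ge v ((j:ℕ)-2*n)
    rw [← hj2] at hs
    simp only [extErrVec, extSeq_ge, hs]
    by_cases hle : (j:ℕ) ≤ 2*n+t
    · rw [if_pos hle, if_pos hle, Omega_left_zero]
    · rw [if_neg hle, if_neg hle]

lemma codeword_apply (v : ℕ → V n) (u : V n) (j : Fin (2*n+τ)) :
    extCodewordMap τ v (u, 0) j =
      if (j:ℕ) < 2*n then omega u (stdBasis (j:ℕ)) else omega u (v ((j:ℕ)-2*n)) := by
  simp only [extCodewordMap]
  by_cases hj : (j:ℕ) < 2*n
  · rw [if_pos hj, extSeq_lt v hj, Omega_left_zero]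
  · rw [if_neg hj]
    have hj2 : (j:ℕ) = 2*n + ((j:ℕ)-2*n) := by omega
    have hs := extSeq_ge v ((j:ℕ)-2*n)
    rw [← hj2] at hs
    rw [hs, Omega_left_zero]

lemma pointwise (v : ℕ → V n) (u : V n) (d : Fin τ → ZMod 2) :
    (∑ t : Fin τ, d t • extErrVec τ v (2*n + (t:ℕ)) = extCodewordMap τ v (u, 0)) ↔
      ((∑ t : Fin τ, d t • v (t:ℕ)) = u ∧
        ∀ s : Fin τ, ∑ t : Fin τ,
          (if (t:ℕ) < (s:ℕ) then d t * omega (v (t:ℕ)) (v (s:ℕ)) else 0) = 0) := by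
  have hSapp : ∀ j : Fin (2*n+τ),
      (∑ t : Fin τ, d t • extErrVec τ v (2*n + (t:ℕ))) j
      = ∑ t : Fin τ, d t * extErrVec τ v (2*n + (t:ℕ)) j := by
    intro j
    simp only [Finset.sum_apply, Pi.smul_apply, smul_eq_mul]
  have hSlt : ∀ (j : Fin (2*n+τ)), (j:ℕ) < 2*n →
      (∑ t : Fin τ, d t • extErrVec τ v (2*n + (t:ℕ))) j
      = omega (∑ t : Fin τ, d t • v (t:ℕ)) (stdBasis (j:ℕ)) := by
    intro j hj
    rw [hSapp j, omega_sum_smul]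
    exact Finset.sum_congr rfl fun t _ => by rw [errvec_apply, if_pos hj]
  have hSge : ∀ (j : Fin (2*n+τ)) (s : Fin τ), (j:ℕ) = 2*n + (s:ℕ) →
      (∑ t : Fin τ, d t • extErrVec τ v (2*n + (t:ℕ))) j
      = ∑ t : Fin τ, (if (s:ℕ) ≤ (t:ℕ) then d t * omega (v (t:ℕ)) (v (s:ℕ)) else 0) := by
    intro j s hj
    rw [hSapp j]
    refine Finset.sum_congr rfl fun t _ => ?_
    rw [errvec_apply, hj, if_neg (by omega)]
    have h2 : 2*n + (s:ℕ) - 2*n = (s:ℕ) := by omega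
    rw [h2]
    by_cases h : (s:ℕ) ≤ (t:ℕ)
    · rw [if_pos (by omega), if_pos h]
    · rw [if_neg (by omega), if_neg h, mul_zero]
  have hsplit : ∀ s : Fin τ, (∑ t : Fin τ, d t * omega (v (t:ℕ)) (v (s:ℕ)))
      = (∑ t : Fin τ, (if (s:ℕ) ≤ (t:ℕ) then d t * omega (v (t:ℕ)) (v (s:ℕ)) else 0))
      + (∑ t : Fin τ, (if (t:ℕ) < (s:ℕ) then d t * omega (v (t:ℕ)) (v (s:ℕ)) else 0)) := by
    intro s
    rw [← Finset.sum_add_distrib]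
    refine Finset.sum_congr rfl fun t _ => ?_
    by_cases h : (s:ℕ) ≤ (t:ℕ)
    · rw [if_pos h, if_neg (by omega), add_zero]
    · rw [if_neg h, if_pos (by omega), zero_add]
  constructor
  · intro h
    have hu : (∑ t : Fin τ, d t • v (t:ℕ)) = u := by
      refine eq_of_forall_omega_stdBasis fun k hk => ?_
      have hj := congrFun h (⟨k, by omega⟩ : Fin (2*n+τ))
      rw [hSlt _ hk, codeword_apply, if_pos hk] at hj
      exact hj
    refine ⟨hu, fun s => ?_⟩
    have hj := congrFun h (⟨2*n + (s:ℕ), by omega⟩ : Fin (2*n+τ))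
    rw [hSge _ s rfl, codeword_apply, if_neg (by omega : ¬ (2*n + (s:ℕ) < 2*n))] at hj
    have h2 : 2*n + (s:ℕ) - 2*n = (s:ℕ) := by omega
    rw [h2] at hj
    have hu' : omega u (v (s:ℕ)) = ∑ t : Fin τ, d t * omega (v (t:ℕ)) (v (s:ℕ)) := by
      rw [← hu, omega_sum_smul]
    rw [hu', hsplit s] at hj
    exact left_eq_add.1 hj
  · rintro ⟨hu, hB⟩
    funext j
    by_cases hj : (j:ℕ) < 2*n
    · rw [hSlt j hj, codeword_apply, if_pos hj, hu]
    · have hjs : (j:ℕ) - 2*n < τ := by omega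
      have hjval : (j:ℕ) = 2*n + ((⟨(j:ℕ) - 2*n, hjs⟩ : Fin τ) : ℕ) := by simp; omega
      rw [hSge j ⟨(j:ℕ) - 2*n, hjs⟩ hjval, codeword_apply, if_neg hj]
      have hu' : omega u (v ((j:ℕ) - 2*n))
          = ∑ t : Fin τ, d t * omega (v (t:ℕ)) (v (((⟨(j:ℕ) - 2*n, hjs⟩ : Fin τ)):ℕ)) := by
        rw [← hu, omega_sum_smul]
      rw [hu', hsplit ⟨(j:ℕ) - 2*n, hjs⟩, hB ⟨(j:ℕ) - 2*n, hjs⟩, add_zero]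

lemma reduce (v : ℕ → V n) (c : Fin (2*n+τ) → ZMod 2) :
    ∑ i : Fin (2*n+τ), c i • extErrVec τ v (i:ℕ)
      = ∑ t : Fin τ, c (Fin.natAdd (2*n) t) • extErrVec τ v (2*n + (t:ℕ)) := by
  rw [Fin.sum_univ_add]
  have h0 : ∑ i : Fin (2*n),
      c (Fin.castAdd τ i) • extErrVec τ v ((Fin.castAdd τ i : Fin (2*n+τ)) : ℕ) = 0 := by
    refine Finset.sum_eq_zero fun i _ => ?_
    rw [Fin.coe_castAdd, extErrVec_eq_zero v i.isLt, smul_zero]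
  rw [h0, zero_add]
  exact Finset.sum_congr rfl fun t _ => by rw [Fin.coe_natAdd]

lemma key (v : ℕ → V n) (u : V n) :
    extCodewordMap τ v (u, 0) ∈ extErrSet τ v ↔
      ∃ d : Fin τ → ZMod 2, (∑ t : Fin τ, d t • v (t:ℕ) = u) ∧
        ∀ s : Fin τ, ∑ t : Fin τ,
          (if (t:ℕ) < (s:ℕ) then d t * omega (v (t:ℕ)) (v (s:ℕ)) else 0) = 0 := by
  rw [extErrSet, Submodule.mem_span_range_iff_exists_fun]
  constructor
  · rintro ⟨c, hc⟩
    rw [reduce v c] at hc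
    exact ⟨fun t => c (Fin.natAdd (2*n) t), (pointwise v u _).1 hc⟩
  · rintro ⟨d, hd⟩
    set c : Fin (2*n+τ) → ZMod 2 :=
      fun i => if h : (i:ℕ) < 2*n then 0 else d ⟨(i:ℕ)-2*n, by omega⟩ with hcdef
    have he : ∀ t : Fin τ, c (Fin.natAdd (2*n) t) = d t := by
      intro t
      simp only [hcdef, Fin.coe_natAdd]
      rw [dif_neg (by omega)]
      exact congrArg d (Fin.ext (by simp))
    refine ⟨c, ?_⟩
    rw [reduce]
    rw [show (∑ t : Fin τ, c (Fin.natAdd (2*n) t) • extErrVec τ v (2*n + (t:ℕ)))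
        = ∑ t : Fin τ, d t • extErrVec τ v (2*n + (t:ℕ)) from
      Finset.sum_congr rfl fun t _ => by rw [he t]]
    exact (pointwise v u d).2 hd

end main

/-- the null operators of the extended dual classical code
(obtained by treating the reference as part of the system via Bell
measurements) are exactly the stabilizer operators of the monitored Clifford
circuit: `C_ext((u,0)) ∈ E_ext ↔ u ∈ 𝓢_τ`. -/
theorem extCodeword_mem_extErrSet_iff_stab
    {n τ : ℕ} (hn : 1 ≤ n) (hτ : 1 ≤ τ) (v : ℕ → V n) (u : V n) :
    extCodewordMap τ v (u, 0) ∈ extErrSet τ v ↔ u ∈ Stab v (τ - 1) := by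
  obtain ⟨m, rfl⟩ : ∃ m, τ = m + 1 := ⟨τ - 1, by omega⟩
  rw [key v u, Nat.add_sub_cancel, stab_iff_exists v m u]
  constructor
  · rintro ⟨d, hsum, hcond⟩
    refine ⟨fun t => if h : t < m + 1 then d ⟨t, h⟩ else 0, ?_, ?_⟩
    · have e : ∑ t ∈ Finset.range (m+1), (if h : t < m+1 then d ⟨t,h⟩ else 0) • v t
          = ∑ t : Fin (m+1), d t • v (t:ℕ) := by
        rw [← Fin.sum_univ_eq_sum_range
          (fun t => (if h : t < m+1 then d ⟨t,h⟩ else 0) • v t) (m+1)]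
        exact Finset.sum_congr rfl fun t _ => by rw [dif_pos t.isLt]
      exact e.trans hsum
    · intro s hs
      have h0 := hcond ⟨s, hs⟩
      have e1 : ∑ t : Fin (m+1), (if (t:ℕ) < s then d t * omega (v (t:ℕ)) (v s) else 0)
          = ∑ t ∈ Finset.range (m+1),
            (if t < s then (if h : t < m+1 then d ⟨t,h⟩ else 0) * omega (v t) (v s) else 0) := by
        rw [← Fin.sum_univ_eq_sum_range
          (fun t => if t < s then (if h : t < m+1 then d ⟨t,h⟩ else 0) * omega (v t) (v s) else 0)
          (m+1)]
        refine Finset.sum_congr rfl fun t _ => ?_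
        by_cases hlt : (t:ℕ) < s
        · rw [if_pos hlt, if_pos hlt, dif_pos t.isLt]
        · rw [if_neg hlt, if_neg hlt]
      have e2 := sum_ite_range
        (fun t => (if h : t < m+1 then d ⟨t,h⟩ else 0) * omega (v t) (v s))
        (show s ≤ m+1 by omega)
      exact e2.symm.trans (e1.symm.trans h0)
  · rintro ⟨d, hsum, hcond⟩
    refine ⟨fun t => d (t:ℕ), ?_, ?_⟩
    · have e : ∑ t : Fin (m+1), d (t:ℕ) • v (t:ℕ)
          = ∑ t ∈ Finset.range (m+1), d t • v t :=
        Fin.sum_univ_eq_sum_range (fun t => d t • v t) (m+1)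
      exact e.trans hsum
    · intro s
      have h0 := hcond (s:ℕ) (by omega)
      have e1 : ∑ t : Fin (m+1),
          (if (t:ℕ) < (s:ℕ) then d (t:ℕ) * omega (v (t:ℕ)) (v (s:ℕ)) else 0)
          = ∑ t ∈ Finset.range (m+1), (if t < (s:ℕ) then d t * omega (v t) (v (s:ℕ)) else 0) :=
        Fin.sum_univ_eq_sum_range
          (fun t => if t < (s:ℕ) then d t * omega (v t) (v (s:ℕ)) else 0) (m+1)
      have e2 := sum_ite_range (fun t => d t * omega (v t) (v (s:ℕ)))
        (show (s:ℕ) ≤ m+1 by omega)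
      exact e1.trans (e2.trans h0)
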